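/- arXiv:1608.01490 — 7 statements merged into one kernel-verified Lean document; each statement's English description precedes it below -/
import Mathlib

section
/- Let A be an integral domain over a field K of characteristic zero and D a locally nilpotent K-derivation of A. Then the kernel of D is factorially closed in A: if a·b ∈ ker D with a, b nonzero, then a ∈ ker D and b ∈ ker D. -/
/-!
Let `n`, `m` be the largest indices with `D^[n] a ≠ 0` and `D^[m] b ≠ 0`. In the Leibniz
expansion of `D^[n + m] (a * b)` every term but one vanishes, leaving
`(n + m).choose n • (D^[n] a * D^[m] b)`, which is nonzero in a domain of characteristic zero.
So `D (a * b) = 0` forces `n + m = 0`, i.e. `D a = 0` and `D b = 0`.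
-/

open Finset

theorem iterate_eq_zero_of_le {M : Type*} [Zero M] {f : M → M} (hf : f 0 = 0) {x : M} {m k : ℕ}
    (hm : f^[m] x = 0) (hmk : m ≤ k) : f^[k] x = 0 := by
  obtain ⟨j, rfl⟩ := Nat.exists_eq_add_of_le hmk
  rw [add_comm, Function.iterate_add_apply, hm, Function.iterate_fixed hf]

theorem exists_iterate_ne_zero_iterate_succ_eq_zero {M : Type*} [Zero M] {f : M → M} {x : M}
    (hx : x ≠ 0) {N : ℕ} (hN : f^[N] x = 0) : ∃ n, f^[n] x ≠ 0 ∧ f^[n + 1] x = 0 := by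
  induction N with
  | zero => exact absurd hN hx
  | succ N ih => exact (em (f^[N] x = 0)).elim ih fun h ↦ ⟨N, h, hN⟩

namespace Derivation

variable {R A : Type*} [CommSemiring R] [CommSemiring A] [Algebra R A] (D : Derivation R A A)

theorem iterate_apply_mul (n : ℕ) (a b : A) :
    D^[n] (a * b) = ∑ ij ∈ antidiagonal n, n.choose ij.1 • (D^[ij.1] a * D^[ij.2] b) := by
  induction n with
  | zero => simp
  | succ n ih =>
    rw [sum_antidiagonal_choose_succ_nsmul (M := A) (fun i j ↦ D^[i] a * D^[j] b) n]
    simp only [Function.iterate_succ_apply', ih, map_sum, map_nsmul, leibniz, smul_eq_mul,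
      smul_add, sum_add_distrib]
    congr 1
    refine sum_congr rfl fun ij hij ↦ ?_
    rw [n.choose_symm_of_eq_add (mem_antidiagonal.1 hij).symm, mul_comm]

theorem iterate_add_apply_mul_of_iterate_succ_eq_zero {a b : A} {n m : ℕ}
    (ha : D^[n + 1] a = 0) (hb : D^[m + 1] b = 0) :
    D^[n + m] (a * b) = (n + m).choose n • (D^[n] a * D^[m] b) := by
  rw [iterate_apply_mul, sum_eq_single_of_mem (n, m) (mem_antidiagonal.2 rfl)]
  rintro ⟨i, j⟩ hij hne
  rw [HasAntidiagonal.mem_antidiagonal] at hij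
  dsimp only at hij ⊢
  rcases Nat.lt_or_ge n i with hi | hi
  · rw [iterate_eq_zero_of_le (map_zero D) ha hi, zero_mul, smul_zero]
  · have hj : m + 1 ≤ j := by
      by_contra hj
      exact hne (Prod.ext (by omega) (by omega))
    rw [iterate_eq_zero_of_le (map_zero D) hb hj, mul_zero, smul_zero]

theorem iterate_add_apply_mul_ne_zero [IsDomain A] [CharZero A] {a b : A} {n m : ℕ}
    (ha : D^[n] a ≠ 0) (ha' : D^[n + 1] a = 0) (hb : D^[m] b ≠ 0) (hb' : D^[m + 1] b = 0) :
    D^[n + m] (a * b) ≠ 0 := by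
  rw [D.iterate_add_apply_mul_of_iterate_succ_eq_zero ha' hb']
  exact smul_ne_zero (Nat.choose_pos (Nat.le_add_right n m)).ne' (mul_ne_zero ha hb)

end Derivation

/-- The kernel of a locally nilpotent derivation of an integral domain over a field of
characteristic zero is factorially closed. -/
theorem kernel_factorially_closed
    (K : Type*) [Field K] [CharZero K]
    (A : Type*) [CommRing A] [IsDomain A] [Algebra K A]
    (D : Derivation K A A)
    (hD : ∀ a : A, ∃ n : ℕ, (fun x => D x)^[n] a = 0)
    (a b : A) (ha : a ≠ 0) (hb : b ≠ 0) (hab : D (a * b) = 0) :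
    D a = 0 ∧ D b = 0 := by
  have : CharZero A := charZero_of_injective_algebraMap (algebraMap K A).injective
  obtain ⟨n, hna, hna'⟩ := exists_iterate_ne_zero_iterate_succ_eq_zero ha (hD a).choose_spec
  obtain ⟨m, hmb, hmb'⟩ := exists_iterate_ne_zero_iterate_succ_eq_zero hb (hD b).choose_spec
  have hnm : n + m = 0 := by
    by_contra hnm
    refine D.iterate_add_apply_mul_ne_zero hna hna' hmb hmb' ?_
    exact iterate_eq_zero_of_le (map_zero D) (f := D) (m := 1) hab (Nat.one_le_iff_ne_zero.2 hnm)
  obtain ⟨rfl, rfl⟩ : n = 0 ∧ m = 0 := by omega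
  exact ⟨hna', hmb'⟩
end

section
/- A finite-dimensional Lie algebra L over an algebraically closed field of characteristic zero is nilpotent if and only if every two-dimensional Lie subalgebra of L is abelian. -/
/-!
By Engel's theorem `L` is nilpotent iff every `ad x` is nilpotent, and over an algebraically
closed field this means that no `ad x` has a nonzero eigenvalue. If `⁅x, y⁆ = μ • y` with
`μ ≠ 0` and `y ≠ 0`, then `x` and `y` span a two-dimensional non-abelian subalgebra.
Conversely, if `a` and `b` span a non-abelian two-dimensional Lie algebra, writing
`⁅a, b⁆ = α • a + β • b` shows that `⁅a, b⁆` is an eigenvector of `ad a` with eigenvalue `β` and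
of `ad b` with eigenvalue `-α`, one of which is nonzero; this is impossible in a nilpotent
Lie algebra.
-/

open Module Polynomial LieAlgebra Submodule

theorem Module.End.isNilpotent_iff_forall_hasEigenvalue_eq_zero {K V : Type*} [Field K]
    [IsAlgClosed K] [AddCommGroup V] [Module K V] [FiniteDimensional K V] (f : End K V) :
    IsNilpotent f ↔ ∀ μ, f.HasEigenvalue μ → μ = 0 := by
  refine ⟨fun hf μ hμ ↦ (hμ.isNilpotent_of_isNilpotent hf).eq_zero, fun h ↦ ?_⟩
  have hsplits : f.charpoly.Splits := IsAlgClosed.splits _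
  have hroots : f.charpoly.roots = Multiset.replicate (finrank K V) 0 := by
    rw [← f.charpoly_natDegree, hsplits.natDegree_eq_card_roots, Multiset.eq_replicate_card]
    exact fun μ hμ ↦ h μ <| (hasEigenvalue_iff_isRoot_charpoly f μ).mpr (isRoot_of_mem_roots hμ)
  rw [LinearMap.isNilpotent_iff_charpoly, hsplits.eq_prod_roots_of_monic f.charpoly_monic, hroots]
  simp

theorem lie_mem_span_of_forall_lie_mem_span {R L : Type*} [CommRing R] [LieRing L]
    [LieAlgebra R L] {s : Set L} (hs : ∀ x ∈ s, ∀ y ∈ s, ⁅x, y⁆ ∈ span R s) {x y : L}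
    (hx : x ∈ span R s) (hy : y ∈ span R s) : ⁅x, y⁆ ∈ span R s := by
  induction hx, hy using span_induction₂ with
  | mem_mem x y hx hy => exact hs x hx y hy
  | zero_left y => simp
  | zero_right x => simp
  | add_left x y z _ _ _ hxz hyz => simpa [add_lie] using add_mem hxz hyz
  | add_right x y z _ _ _ hxy hxz => simpa [lie_add] using add_mem hxy hxz
  | smul_left r x y _ _ h => simpa [smul_lie] using smul_mem _ r h
  | smul_right r x y _ _ h => simpa [lie_smul] using smul_mem _ r h

namespace LieAlgebra

variable {K L : Type*} [Field K] [LieRing L] [LieAlgebra K L]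

theorem hasEigenvalue_ad_of_lie_eq_smul {x y : L} {μ : K} (hy : y ≠ 0) (h : ⁅x, y⁆ = μ • y) :
    (ad K L x).HasEigenvalue μ :=
  Module.End.hasEigenvalue_of_hasEigenvector ⟨Module.End.mem_eigenspace_iff.mpr h, hy⟩

theorem eq_zero_of_hasEigenvalue_ad [LieRing.IsNilpotent L] {x : L} {μ : K}
    (h : (ad K L x).HasEigenvalue μ) : μ = 0 :=
  (h.isNilpotent_of_isNilpotent (LieModule.isNilpotent_toEnd_of_isNilpotent K L L x)).eq_zero

theorem isNilpotent_iff_forall_hasEigenvalue_ad_eq_zero [IsAlgClosed K] [FiniteDimensional K L] :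
    LieRing.IsNilpotent L ↔ ∀ (x : L) (μ : K), (ad K L x).HasEigenvalue μ → μ = 0 := by
  simp only [isNilpotent_iff_forall (R := K),
    Module.End.isNilpotent_iff_forall_hasEigenvalue_eq_zero]

variable (K) in
theorem linearIndependent_pair_of_lie_ne_zero {x y : L} (h : ⁅x, y⁆ ≠ 0) :
    LinearIndependent K ![x, y] := by
  have hx : x ≠ 0 := by rintro rfl; simp at h
  refine (LinearIndependent.pair_iff' hx).mpr fun a hax ↦ h ?_
  rw [← hax, lie_smul, lie_self, smul_zero]

theorem exists_hasEigenvalue_ad_ne_zero_of_finrank_eq_two (h2 : finrank K L = 2)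
    (hL : ¬IsLieAbelian L) : ∃ (x : L) (μ : K), μ ≠ 0 ∧ (ad K L x).HasEigenvalue μ := by
  obtain ⟨a, b, hab⟩ : ∃ a b : L, ⁅a, b⁆ ≠ 0 := by
    by_contra! h
    exact hL ⟨h⟩
  have : FiniteDimensional K L := .of_finrank_pos (by omega)
  have hspan : span K {a, b} = ⊤ := by
    rw [← Matrix.range_cons_cons_empty a b ![]]
    exact (linearIndependent_pair_of_lie_ne_zero K hab).span_eq_top_of_card_eq_finrank'
      (by simp [h2])
  obtain ⟨α, β, hc⟩ := mem_span_pair.mp (hspan ▸ mem_top : ⁅a, b⁆ ∈ span K {a, b})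
  have hac : ⁅a, ⁅a, b⁆⁆ = β • ⁅a, b⁆ := by
    conv_lhs => rw [← hc]
    simp [lie_add, lie_smul]
  have hbc : ⁅b, ⁅a, b⁆⁆ = -α • ⁅a, b⁆ := by
    conv_lhs => rw [← hc]
    rw [lie_add, lie_smul, lie_smul, lie_self, smul_zero, add_zero, ← lie_skew, smul_neg, neg_smul]
  by_cases hβ : β = 0
  · have hα : α ≠ 0 := by
      rintro rfl
      simp [hβ] at hc
      exact hab hc.symm
    exact ⟨b, -α, neg_ne_zero.mpr hα, hasEigenvalue_ad_of_lie_eq_smul hab hbc⟩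
  · exact ⟨a, β, hβ, hasEigenvalue_ad_of_lie_eq_smul hab hac⟩

theorem isLieAbelian_of_isNilpotent_of_finrank_eq_two [LieRing.IsNilpotent L]
    (h2 : finrank K L = 2) : IsLieAbelian L := by
  by_contra hL
  obtain ⟨x, μ, hμ, h⟩ := exists_hasEigenvalue_ad_ne_zero_of_finrank_eq_two h2 hL
  exact hμ (eq_zero_of_hasEigenvalue_ad h)

theorem exists_finrank_eq_two_not_isLieAbelian_of_hasEigenvalue_ad {x : L} {μ : K}
    (hμ : μ ≠ 0) (h : (ad K L x).HasEigenvalue μ) :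
    ∃ M : LieSubalgebra K L, finrank K M = 2 ∧ ¬IsLieAbelian M := by
  obtain ⟨y, hy⟩ := h.exists_hasEigenvector
  have hxy : ⁅x, y⁆ = μ • y := hy.apply_eq_smul
  have hxy0 : ⁅x, y⁆ ≠ 0 := hxy ▸ smul_ne_zero hμ hy.2
  have hx_mem : x ∈ span K {x, y} := subset_span (by simp)
  have hy_mem : y ∈ span K {x, y} := subset_span (by simp)
  have hbracket : ∀ a ∈ ({x, y} : Set L), ∀ b ∈ ({x, y} : Set L), ⁅a, b⁆ ∈ span K {x, y} := by
    have hμy : μ • y ∈ span K {x, y} := smul_mem _ _ hy_mem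
    rintro a (rfl | rfl) b (rfl | rfl)
    · simp
    · rwa [hxy]
    · rwa [← lie_skew, hxy, neg_mem_iff]
    · simp
  let M : LieSubalgebra K L :=
    { span K {x, y} with lie_mem' := lie_mem_span_of_forall_lie_mem_span hbracket }
  refine ⟨M, ?_, fun ⟨hM⟩ ↦ hxy0 (congrArg Subtype.val (hM ⟨x, hx_mem⟩ ⟨y, hy_mem⟩))⟩
  have := finrank_span_eq_card (linearIndependent_pair_of_lie_ne_zero K hxy0)
  rwa [Matrix.range_cons_cons_empty] at this

end LieAlgebra

theorem nilpotent_iff_two_dim_subalgebras_abelian_general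
    (K : Type*) [Field K] [IsAlgClosed K]
    (L : Type*) [LieRing L] [LieAlgebra K L] [FiniteDimensional K L] :
    LieModule.IsNilpotent L L ↔
      ∀ M : LieSubalgebra K L, Module.finrank K M = 2 → IsLieAbelian M := by
  constructor
  · intro hL M hM
    have : LieRing.IsNilpotent M :=
      Function.Injective.lieAlgebra_isNilpotent (R := K) (f := M.incl) Subtype.val_injective
    exact isLieAbelian_of_isNilpotent_of_finrank_eq_two hM
  · intro h
    refine (isNilpotent_iff_forall_hasEigenvalue_ad_eq_zero (K := K)).mpr fun x μ hμ ↦ ?_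
    by_contra hμ0
    obtain ⟨M, hM, hM_nonabelian⟩ :=
      exists_finrank_eq_two_not_isLieAbelian_of_hasEigenvalue_ad hμ0 hμ
    exact hM_nonabelian (h M hM)

/-- A finite-dimensional Lie algebra over an algebraically closed field of characteristic zero
is nilpotent iff every two-dimensional Lie subalgebra is abelian. -/
theorem nilpotent_iff_two_dim_subalgebras_abelian
    (K : Type*) [Field K] [IsAlgClosed K] [CharZero K]
    (L : Type*) [LieRing L] [LieAlgebra K L] [FiniteDimensional K L] :
    LieModule.IsNilpotent L L ↔
      ∀ M : LieSubalgebra K L, Module.finrank K M = 2 → IsLieAbelian M :=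
  nilpotent_iff_two_dim_subalgebras_abelian_general K L
end

section
/- Let A be an integral domain over an algebraically closed field K of characteristic zero, and let D₁, D₂ be nonzero K-derivations of A with [D₁, D₂] = D₂, where D₁ is locally nilpotent. Then ker D₁ ⊆ ker D₂. -/
theorem Derivation.commutator_apply_of_apply_eq_zero {R A : Type*} [CommRing R] [CommRing A]
    [Algebra R A] (D₁ D₂ : Derivation R A A) {a : A} (ha : D₁ a = 0) :
    ⁅D₁, D₂⁆ a = D₁ (D₂ a) := by
  rw [Derivation.commutator_apply, ha, map_zero, sub_zero]

theorem ker_subset_ker_of_bracket_eq_general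
    (K : Type*) [Field K]
    (A : Type*) [CommRing A] [Algebra K A]
    (D₁ D₂ : Derivation K A A)
    (hbr : ⁅D₁, D₂⁆ = D₂)
    (hln : ∀ a : A, ∃ n : ℕ, (fun x => D₁ x)^[n] a = 0) :
    ∀ a : A, D₁ a = 0 → D₂ a = 0 := by
  intro a ha
  have hfixed : D₁ (D₂ a) = D₂ a := by
    rw [← D₁.commutator_apply_of_apply_eq_zero D₂ ha, hbr]
  obtain ⟨n, hn⟩ := hln (D₂ a)
  exact (Function.iterate_fixed hfixed n).symm.trans hn

/-- If `D₁, D₂` are nonzero derivations of an integral domain with `[D₁,D₂] = D₂` and `D₁`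
locally nilpotent, then `ker D₁ ⊆ ker D₂`. -/
theorem ker_subset_ker_of_bracket_eq
    (K : Type*) [Field K] [IsAlgClosed K] [CharZero K]
    (A : Type*) [CommRing A] [IsDomain A] [Algebra K A]
    (D₁ D₂ : Derivation K A A) (h₁ : D₁ ≠ 0) (h₂ : D₂ ≠ 0)
    (hbr : ⁅D₁, D₂⁆ = D₂)
    (hln : ∀ a : A, ∃ n : ℕ, (fun x => D₁ x)^[n] a = 0) :
    ∀ a : A, D₁ a = 0 → D₂ a = 0 :=
  ker_subset_ker_of_bracket_eq_general K A D₁ D₂ hbr hln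
end

section
/- Let A be an integral domain over an algebraically closed field K of characteristic zero. Every finite-dimensional (over K) Lie subalgebra L of Der_K(A) consisting entirely of locally nilpotent derivations is a nilpotent Lie algebra. -/
/-!
By Engel's theorem it suffices that `ad D` is nilpotent on `L` for every `D ∈ L`, and over an
algebraically closed field this holds once `ad D` has no nonzero eigenvalue. If `⁅D, E⁆ = μ • E`
with `μ ≠ 0`, then `E` vanishes on `ker Dⁿ` by induction on `n`: for `Dⁿ⁺¹ v = 0` we get
`E (D v) = 0`, so `D (E v) = μ • E v`, and a nonzero `E v` would be an eigenvector with nonzero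
eigenvalue of the locally nilpotent `D`. Since `D` is locally nilpotent, these kernels exhaust `A`.
-/

open Polynomial

namespace Module.End

variable {K V : Type*} [Field K] [AddCommGroup V] [Module K V]

theorem HasEigenvector.eq_zero_of_pow_apply_eq_zero {f : End K V} {μ : K} {v : V}
    (hv : f.HasEigenvector μ v) {n : ℕ} (hn : (f ^ n) v = 0) : μ = 0 := by
  rw [hv.pow_apply, smul_eq_zero] at hn
  exact pow_eq_zero_iff'.mp (hn.resolve_right hv.2) |>.1

theorem isNilpotent_of_forall_hasEigenvalue_eq_zero [IsAlgClosed K] [FiniteDimensional K V]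
    {f : End K V} (h : ∀ μ, f.HasEigenvalue μ → μ = 0) : IsNilpotent f := by
  set p := minpoly K f
  have hroots : p.roots = Multiset.replicate (Multiset.card p.roots) 0 :=
    Multiset.eq_replicate_card.mpr fun μ hμ ↦
      h μ (hasEigenvalue_of_isRoot (isRoot_of_mem_roots hμ))
  have hp : p = X ^ Multiset.card p.roots := by
    rw [(IsAlgClosed.splits p).eq_prod_roots_of_monic
      (minpoly.monic (Algebra.IsIntegral.isIntegral f)), hroots]
    simp
  have hmin : aeval f p = 0 := minpoly.aeval K f
  rw [hp, map_pow, aeval_X] at hmin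
  exact ⟨_, hmin⟩

theorem eq_zero_of_lie_eq_smul {D E : End K V} {μ : K} (hD : ∀ v, ∃ n, (D ^ n) v = 0)
    (hμ : μ ≠ 0) (hDE : ⁅D, E⁆ = μ • E) : E = 0 := by
  suffices ∀ n v, (D ^ n) v = 0 → E v = 0 from
    LinearMap.ext fun v ↦ (hD v).elim fun n ↦ this n v
  intro n
  induction n with
  | zero => intro v hv; simp_all
  | succ n ih =>
    intro v hv
    have hEDv : E (D v) = 0 := ih _ (by rwa [pow_succ, mul_apply] at hv)
    by_contra hEv
    have hEigen : D.HasEigenvector μ (E v) := by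
      refine ⟨mem_eigenspace_iff.mpr ?_, hEv⟩
      simpa [Ring.lie_def, hEDv] using LinearMap.congr_fun hDE v
    obtain ⟨m, hm⟩ := hD (E v)
    exact hμ (hEigen.eq_zero_of_pow_apply_eq_zero hm)

end Module.End

theorem Derivation.eq_zero_of_lie_eq_smul {K A : Type*} [Field K] [CommRing A] [Algebra K A]
    {D E : Derivation K A A} {μ : K} (hD : ∀ a, ∃ n, (fun x ↦ D x)^[n] a = 0)
    (hμ : μ ≠ 0) (hDE : ⁅D, E⁆ = μ • E) : E = 0 := by
  have hE : (E : Module.End K A) = 0 := by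
    refine Module.End.eq_zero_of_lie_eq_smul (D := D) (fun a ↦ ?_) hμ ?_
    · simpa [Module.End.pow_apply] using hD a
    · rw [← commutator_coe_linear_map, hDE, coe_smul_linearMap]
  ext a
  exact LinearMap.congr_fun hE a

theorem finiteDimensional_lnd_subalgebra_nilpotent_general
    (K : Type*) [Field K] [IsAlgClosed K]
    (A : Type*) [CommRing A] [Algebra K A]
    (L : LieSubalgebra K (Derivation K A A)) [FiniteDimensional K L]
    (hL : ∀ D ∈ L, ∀ a : A, ∃ n : ℕ, (fun x => D x)^[n] a = 0) :
    LieRing.IsNilpotent L := by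
  rw [LieAlgebra.isNilpotent_iff_forall (R := K)]
  intro D
  refine Module.End.isNilpotent_of_forall_hasEigenvalue_eq_zero fun μ hμ ↦ by_contra fun hμ0 ↦ ?_
  obtain ⟨E, hE⟩ := hμ.exists_hasEigenvector
  refine hE.2 (Subtype.ext (Derivation.eq_zero_of_lie_eq_smul (hL D D.2) hμ0 ?_))
  simpa using congrArg Subtype.val hE.apply_eq_smul

/-- Every finite-dimensional Lie subalgebra of `Der_K(A)` consisting of locally nilpotent
derivations of an integral domain `A` over an algebraically closed field of characteristic
zero is nilpotent. -/
theorem finiteDimensional_lnd_subalgebra_nilpotent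
    (K : Type*) [Field K] [IsAlgClosed K] [CharZero K]
    (A : Type*) [CommRing A] [IsDomain A] [Algebra K A]
    (L : LieSubalgebra K (Derivation K A A)) [FiniteDimensional K L]
    (hL : ∀ D ∈ L, ∀ a : A, ∃ n : ℕ, (fun x => D x)^[n] a = 0) :
    LieRing.IsNilpotent L :=
  finiteDimensional_lnd_subalgebra_nilpotent_general K A L hL
end

section
/- Let L be a Lie subalgebra of Der_K(K[x,y]) all of whose elements are locally nilpotent derivations. Then L satisfies the Engel condition: for all D₁, D₂ ∈ L there exists k ≥ 1 with (ad D₂)^k(D₁) = 0. -/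
/-!
Write `ad` for `f ↦ ⁅f, u⁆ = f u - u f`. Right and left multiplication by `u` commute, so the
binomial theorem gives `ad^k e = ∑ ± (k choose m) u^(k-m) e u^m`. If `u` is locally nilpotent and
`u^n x = 0`, then every summand kills `x` as soon as `k - m` exceeds the nilpotency index of each of
the finitely many vectors `e (u^m x)`, `m < n`. A derivation of a polynomial ring in finitely many
variables is determined by its values on the variables, so `ad^k e = 0` for large `k`.
-/

open MvPolynomial Filter

namespace Module.End

variable {R M : Type*} [CommRing R] [AddCommGroup M] [Module R M]

def IsLocallyNilpotent (u : Module.End R M) : Prop :=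
  ∀ x, ∃ n : ℕ, (u ^ n) x = 0

theorem iterate_lie_eq_pow_apply (u e : Module.End R M) (k : ℕ) :
    (fun f => ⁅f, u⁆)^[k] e =
      ((LinearMap.mulRight R u - LinearMap.mulLeft R u : Module.End R (Module.End R M)) ^ k) e := by
  induction k with
  | zero => rfl
  | succ k ih =>
    rw [Function.iterate_succ_apply', ih, pow_succ', mul_apply, Ring.lie_def]
    rfl

theorem iterate_lie_eq_sum (u e : Module.End R M) (k : ℕ) :
    (fun f => ⁅f, u⁆)^[k] e =
      ∑ m ∈ Finset.range (k + 1), ((-1 : ℤ) ^ (k - m) * k.choose m) • (u ^ (k - m) * e * u ^ m) := by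
  rw [iterate_lie_eq_pow_apply, sub_eq_add_neg, ← neg_one_zsmul,
    ((LinearMap.commute_mulLeft_right (R := R) u u).symm.smul_right (-1 : ℤ)).add_pow,
    LinearMap.sum_apply]
  refine Finset.sum_congr rfl fun m _ => ?_
  rw [smul_pow, mul_smul_comm, smul_mul_assoc, LinearMap.smul_apply, mul_apply, natCast_apply,
    mul_apply, LinearMap.pow_mulRight, LinearMap.pow_mulLeft, LinearMap.mulLeft_apply,
    LinearMap.mulRight_apply, mul_smul_comm, smul_mul_assoc, mul_smul, natCast_zsmul]

theorem IsLocallyNilpotent.eventually_pow_apply_eq_zero {u : Module.End R M}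
    (hu : u.IsLocallyNilpotent) (x : M) : ∀ᶠ k in atTop, (u ^ k) x = 0 := by
  obtain ⟨n, hn⟩ := hu x
  filter_upwards [eventually_ge_atTop n] with k hk using pow_map_zero_of_le hk hn

theorem IsLocallyNilpotent.eventually_iterate_lie_apply_eq_zero {u : Module.End R M}
    (hu : u.IsLocallyNilpotent) (e : Module.End R M) (x : M) :
    ∀ᶠ k in atTop, ((fun f => ⁅f, u⁆)^[k] e) x = 0 := by
  obtain ⟨n, hn⟩ := hu x
  have hlow : ∀ m ∈ Finset.range n, ∀ᶠ k in atTop, (u ^ (k - m)) (e ((u ^ m) x)) = 0 :=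
    fun m _ => (tendsto_sub_atTop_nat m).eventually (hu.eventually_pow_apply_eq_zero _)
  filter_upwards [(Finset.range n).eventually_all.2 hlow] with k hk
  rw [iterate_lie_eq_sum, LinearMap.sum_apply]
  refine Finset.sum_eq_zero fun m _ => ?_
  rw [LinearMap.smul_apply, mul_apply, mul_apply]
  rcases lt_or_ge m n with hm | hm
  · rw [hk m (Finset.mem_range.2 hm), smul_zero]
  · rw [pow_map_zero_of_le hm hn, map_zero, map_zero, smul_zero]

end Module.End

theorem Derivation.coe_iterate_lie {R A : Type*} [CommRing R] [CommRing A] [Algebra R A]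
    (D E : Derivation R A A) (k : ℕ) :
    ((fun F => ⁅F, D⁆)^[k] E : Module.End R A) = (fun f => ⁅f, (D : Module.End R A)⁆)^[k] E := by
  induction k with
  | zero => rfl
  | succ k ih =>
    rw [Function.iterate_succ_apply', Function.iterate_succ_apply', ← ih,
      Derivation.commutator_coe_linear_map]

theorem MvPolynomial.eventually_iterate_lie_eq_zero {R σ : Type*} [CommRing R] [Finite σ]
    {D : Derivation R (MvPolynomial σ R) (MvPolynomial σ R)}
    (hD : Module.End.IsLocallyNilpotent (D : Module.End R (MvPolynomial σ R)))
    (E : Derivation R (MvPolynomial σ R) (MvPolynomial σ R)) :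
    ∀ᶠ k in atTop, (fun F => ⁅F, D⁆)^[k] E = 0 := by
  filter_upwards [eventually_all.2 fun i => hD.eventually_iterate_lie_apply_eq_zero E (X i)]
    with k hk
  simp only [← Derivation.coe_iterate_lie] at hk
  exact derivation_ext fun i => hk i

theorem lnd_subalgebra_engel_general
    (K : Type*) [Field K]
    (L : LieSubalgebra K (Derivation K (MvPolynomial (Fin 2) K) (MvPolynomial (Fin 2) K)))
    (hL : ∀ D ∈ L, ∀ a : MvPolynomial (Fin 2) K, ∃ n : ℕ, (fun x => D x)^[n] a = 0) :
    ∀ D₁ ∈ L, ∀ D₂ ∈ L, ∃ k : ℕ, 1 ≤ k ∧ (fun D => ⁅D, D₂⁆)^[k] D₁ = 0 := by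
  intro D₁ _ D₂ hD₂
  have hnil : Module.End.IsLocallyNilpotent (D₂ : Module.End K (MvPolynomial (Fin 2) K)) :=
    fun a => (hL D₂ hD₂ a).imp fun n hn => by rwa [Module.End.pow_apply]
  exact ((eventually_ge_atTop 1).and (eventually_iterate_lie_eq_zero hnil D₁)).exists

/-- A Lie subalgebra of `Der_K(K[x,y])` consisting of locally nilpotent derivations satisfies
the Engel condition. -/
theorem lnd_subalgebra_engel
    (K : Type*) [Field K] [IsAlgClosed K] [CharZero K]
    (L : LieSubalgebra K (Derivation K (MvPolynomial (Fin 2) K) (MvPolynomial (Fin 2) K)))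
    (hL : ∀ D ∈ L, ∀ a : MvPolynomial (Fin 2) K, ∃ n : ℕ, (fun x => D x)^[n] a = 0) :
    ∀ D₁ ∈ L, ∀ D₂ ∈ L, ∃ k : ℕ, 1 ≤ k ∧ (fun D => ⁅D, D₂⁆)^[k] D₁ = 0 :=
  lnd_subalgebra_engel_general K L hL
end

section
/- Let L be a Lie subalgebra of Der_K(K[x,y]) consisting of locally nilpotent derivations and containing ∂/∂x, ∂/∂y, and x·∂/∂y. Then every element D ∈ L of the form D = p(x,y)∂/∂x + q(x,y)∂/∂y with deg p ≤ 1 and deg q ≤ 1 lies in the K-span of ∂/∂x, ∂/∂y, x·∂/∂y. -/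
/-!
Subtracting the allowed part `a ∂x + d ∂y + e x∂y` from `D` leaves a derivation `D' ∈ L` with
`D' x = b x + c y` and `D' y = f y`. The bracket `⁅x∂y, D'⁆ ∈ L` sends `x` to `c x`, and a locally
nilpotent map has no nonzero eigenvalue, so `c = 0`; then `x` and `y` are eigenvectors of `D'`
itself, with eigenvalues `b` and `f`, which therefore vanish too.
-/

open MvPolynomial

namespace MvPolynomial

section CommSemiring

variable {σ R : Type*} [CommSemiring R]

theorem eq_C_add_sum_C_mul_X_of_totalDegree_le_one [Fintype σ] {p : MvPolynomial σ R}
    (hp : p.totalDegree ≤ 1) :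
    p = C (coeff 0 p) + ∑ i, C (coeff (Finsupp.single i 1) p) * X i := by
  classical
  ext m
  simp only [coeff_add, coeff_C, coeff_sum, coeff_C_mul, coeff_X, mul_ite, mul_one, mul_zero]
  obtain h0 | h1 | h2 : m.degree = 0 ∨ m.degree = 1 ∨ 1 < m.degree := by omega
  · obtain rfl := (Finsupp.degree_eq_zero_iff m).mp h0
    simp
  · obtain ⟨j, rfl⟩ := (Finsupp.sum_eq_one_iff m).mp h1
    simp [Finsupp.single_left_inj, eq_comm (a := (0 : σ →₀ ℕ))]
  · rw [coeff_eq_zero_of_totalDegree_lt (hp.trans_lt h2)]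
    have hm0 : m ≠ 0 := by rintro rfl; simp at h2
    have hm1 : ∀ i, Finsupp.single i 1 ≠ m := by rintro i rfl; simp at h2
    simp [hm0.symm, hm1]

theorem exists_eq_C_add_C_mul_X_add_C_mul_X_of_totalDegree_le_one
    {p : MvPolynomial (Fin 2) R} (hp : p.totalDegree ≤ 1) :
    ∃ a b c : R, p = C a + C b * X 0 + C c * X 1 :=
  ⟨_, _, _, (eq_C_add_sum_C_mul_X_of_totalDegree_le_one hp).trans <| by
    rw [Fin.sum_univ_two, add_assoc]⟩

end CommSemiring

theorem lie_smul_pderiv_apply_X {σ R : Type*} [CommRing R] (a : MvPolynomial σ R) {j k : σ}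
    (hkj : k ≠ j) (D : Derivation R (MvPolynomial σ R) (MvPolynomial σ R)) :
    ⁅(a • pderiv j : Derivation R (MvPolynomial σ R) (MvPolynomial σ R)), D⁆ (X k) =
      a * pderiv j (D (X k)) := by
  simp [Derivation.commutator_apply, pderiv_X_of_ne hkj]

end MvPolynomial

def IsLocallyNilpotent {M : Type*} [Zero M] (f : M → M) : Prop :=
  ∀ a, ∃ n, f^[n] a = 0

theorem IsLocallyNilpotent.eq_zero_of_apply_eq_smul {R M : Type*} [CommRing R] [IsDomain R]
    [AddCommGroup M] [Module R M] [Module.IsTorsionFree R M] {f : Module.End R M}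
    (hf : IsLocallyNilpotent ⇑f) {μ : R} {v : M} (hv : v ≠ 0) (hfv : f v = μ • v) : μ = 0 := by
  obtain ⟨n, hn⟩ := hf v
  have hμ : f.HasEigenvector μ v :=
    Module.End.hasEigenvector_iff.mpr ⟨Module.End.mem_eigenspace_iff.mpr hfv, hv⟩
  refine IsNilpotent.eq_zero ⟨n, ?_⟩
  simpa [Module.End.pow_apply, hn, hv, eq_comm (a := (0 : M))] using hμ.pow_apply n

section TwoVariables

variable {K : Type*} [Field K]

local notation "𝔻" => Derivation K (MvPolynomial (Fin 2) K) (MvPolynomial (Fin 2) K)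

theorem eq_zero_of_isLocallyNilpotent_of_isLocallyNilpotent_lie {D : 𝔻}
    (hD : IsLocallyNilpotent ⇑D)
    (hE : IsLocallyNilpotent ⇑⁅(X 0 : MvPolynomial (Fin 2) K) • (pderiv 1 : 𝔻), D⁆)
    {b c f : K} (hx : D (X 0) = C b * X 0 + C c * X 1) (hy : D (X 1) = C f * X 1) :
    D = 0 := by
  have hEx : ⁅(X 0 : MvPolynomial (Fin 2) K) • (pderiv 1 : 𝔻), D⁆ (X 0) = c • X 0 := by
    simp [lie_smul_pderiv_apply_X _ (zero_ne_one (α := Fin 2)), hx, smul_eq_C_mul, mul_comm]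
  have hc : c = 0 := hE.eq_zero_of_apply_eq_smul
    (f := Derivation.toLinearMap ⁅X 0 • pderiv 1, D⁆) (X_ne_zero 0) hEx
  have hb : b = 0 := hD.eq_zero_of_apply_eq_smul (X_ne_zero 0) <| by
    simp [hx, hc, smul_eq_C_mul]
  have hf : f = 0 := hD.eq_zero_of_apply_eq_smul (X_ne_zero 1) <| by
    simp [hy, smul_eq_C_mul]
  exact derivation_ext <| Fin.forall_fin_two.mpr ⟨by simp [hx, hb, hc], by simp [hy, hf]⟩

end TwoVariables

theorem lnd_subalgebra_linear_part_general
    (K : Type*) [Field K]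
    (L : LieSubalgebra K (Derivation K (MvPolynomial (Fin 2) K) (MvPolynomial (Fin 2) K)))
    (hL : ∀ D ∈ L, ∀ a : MvPolynomial (Fin 2) K, ∃ n : ℕ, (fun x => D x)^[n] a = 0)
    (hx : (pderiv 0 : Derivation K (MvPolynomial (Fin 2) K) (MvPolynomial (Fin 2) K)) ∈ L)
    (hy : (pderiv 1 : Derivation K (MvPolynomial (Fin 2) K) (MvPolynomial (Fin 2) K)) ∈ L)
    (hxy : (X 0 : MvPolynomial (Fin 2) K) •
      (pderiv 1 : Derivation K (MvPolynomial (Fin 2) K) (MvPolynomial (Fin 2) K)) ∈ L) :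
    ∀ D ∈ L, (D (X 0)).totalDegree ≤ 1 → (D (X 1)).totalDegree ≤ 1 →
      D ∈ Submodule.span K
        ({(pderiv 0 : Derivation K (MvPolynomial (Fin 2) K) (MvPolynomial (Fin 2) K)),
          pderiv 1, (X 0 : MvPolynomial (Fin 2) K) • pderiv 1} :
          Set (Derivation K (MvPolynomial (Fin 2) K) (MvPolynomial (Fin 2) K))) := by
  intro D hD hp hq
  obtain ⟨a, b, c, hp⟩ := exists_eq_C_add_C_mul_X_add_C_mul_X_of_totalDegree_le_one hp
  obtain ⟨d, e, f, hq⟩ := exists_eq_C_add_C_mul_X_add_C_mul_X_of_totalDegree_le_one hq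
  set xDy : Derivation K (MvPolynomial (Fin 2) K) (MvPolynomial (Fin 2) K) :=
    (X 0 : MvPolynomial (Fin 2) K) • pderiv 1
  set D' := D - a • pderiv 0 - d • pderiv 1 - e • xDy
  have hD' : D' ∈ L :=
    L.sub_mem (L.sub_mem (L.sub_mem hD (L.smul_mem a hx)) (L.smul_mem d hy)) (L.smul_mem e hxy)
  have hD'0 : D' = 0 := by
    refine eq_zero_of_isLocallyNilpotent_of_isLocallyNilpotent_lie (hL D' hD')
      (hL _ (L.lie_mem hxy hD')) (b := b) (c := c) (f := f) ?_ ?_ <;>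
    · simp only [D', xDy, Derivation.coe_sub, Derivation.coe_smul, Pi.sub_apply, Pi.smul_apply,
        smul_eq_mul, smul_eq_C_mul, hp, hq, pderiv_X_self,
        pderiv_X_of_ne (zero_ne_one (α := Fin 2)), pderiv_X_of_ne (one_ne_zero (α := Fin 2))]
      ring
  have hD_eq : D = a • pderiv 0 + d • pderiv 1 + e • xDy := by
    linear_combination (norm := module) hD'0
  rw [hD_eq]
  refine add_mem (add_mem ?_ ?_) ?_ <;>
    exact Submodule.smul_mem _ _ (Submodule.subset_span (by simp [xDy]))

/-- Let `L ⊆ Der_K(K[x,y])` be a Lie subalgebra of locally nilpotent derivations containing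
`∂/∂x`, `∂/∂y`, `x∂/∂y`. Then every `D = p∂/∂x + q∂/∂y ∈ L` with `deg p ≤ 1`, `deg q ≤ 1`
lies in the `K`-span of `∂/∂x`, `∂/∂y`, `x∂/∂y`. -/
theorem lnd_subalgebra_linear_part
    (K : Type*) [Field K] [IsAlgClosed K] [CharZero K]
    (L : LieSubalgebra K (Derivation K (MvPolynomial (Fin 2) K) (MvPolynomial (Fin 2) K)))
    (hL : ∀ D ∈ L, ∀ a : MvPolynomial (Fin 2) K, ∃ n : ℕ, (fun x => D x)^[n] a = 0)
    (hx : (pderiv 0 : Derivation K (MvPolynomial (Fin 2) K) (MvPolynomial (Fin 2) K)) ∈ L)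
    (hy : (pderiv 1 : Derivation K (MvPolynomial (Fin 2) K) (MvPolynomial (Fin 2) K)) ∈ L)
    (hxy : (X 0 : MvPolynomial (Fin 2) K) •
      (pderiv 1 : Derivation K (MvPolynomial (Fin 2) K) (MvPolynomial (Fin 2) K)) ∈ L) :
    ∀ D ∈ L, (D (X 0)).totalDegree ≤ 1 → (D (X 1)).totalDegree ≤ 1 →
      D ∈ Submodule.span K
        ({(pderiv 0 : Derivation K (MvPolynomial (Fin 2) K) (MvPolynomial (Fin 2) K)),
          pderiv 1, (X 0 : MvPolynomial (Fin 2) K) • pderiv 1} :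
          Set (Derivation K (MvPolynomial (Fin 2) K) (MvPolynomial (Fin 2) K))) :=
  lnd_subalgebra_linear_part_general K L hL hx hy hxy
end

section
/- Let L be a Lie subalgebra of Der_K(K[x,y]) consisting of locally nilpotent derivations and containing ∂/∂x, ∂/∂y, and x·∂/∂y. Then every element of L has the form α·∂/∂x + q(x)·∂/∂y with α ∈ K and q ∈ K[x]; that is, L ⊆ u₂(K). -/
open MvPolynomial

/-!
A locally nilpotent derivation `E` of a domain has no eigenvector `p ≠ 0` with eigenvalue
`r ≠ 0` in `ker E`, since `E^n p = r^n p`. For `D ∈ L`, applying to `D` the power of `ad ∂_x` or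
`ad ∂_y` that reaches the last nonvanishing derivative of `D x` or `D y`, and bracketing with
`x ∂_y`, gives elements of `L` with such an eigenvector unless, successively, `∂_y (D x) = 0`,
`D x = α` is constant and `∂_y² (D y) = 0`. Writing `D y = a(x) + b(x) y`, bracketing with `∂_x`
forces `b` to be a constant `β`; then `⁅∂_y, D⁆ = β ∂_y` gives `∂_y (D^n y) = β^n`, so `β = 0`
and `D = α ∂_x + a(x) ∂_y`.
-/

theorem Function.exists_iterate_apply_ne_zero_apply_apply_eq_zero {M : Type*} [Zero M]
    {T : M → M} (hT : T 0 = 0) {f : M} (hf : T f ≠ 0) (hnil : ∃ n, T^[n] f = 0) :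
    ∃ k, T (T^[k] f) ≠ 0 ∧ T (T (T^[k] f)) = 0 := by
  classical
  have hex : ∃ n, T (T^[n] f) = 0 := by
    obtain ⟨n, hn⟩ := hnil
    exact ⟨n, by rw [hn, hT]⟩
  have hspec := Nat.find_spec hex
  obtain ⟨k, hk⟩ :=
    Nat.exists_eq_add_one_of_ne_zero (n := Nat.find hex) fun h0 => hf (by rwa [h0] at hspec)
  rw [hk, Function.iterate_succ_apply'] at hspec
  exact ⟨k, Nat.find_min hex (by omega), hspec⟩

theorem LieSubalgebra.ad_pow_apply_mem {R L : Type*} [CommRing R] [LieRing L] [LieAlgebra R L]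
    (H : LieSubalgebra R L) {x y : L} (hx : x ∈ H) (hy : y ∈ H) (n : ℕ) :
    (LieAlgebra.ad R L x ^ n) y ∈ H := by
  rw [← LieSubalgebra.coe_ad_pow (H := H) (x := ⟨x, hx⟩) (y := ⟨y, hy⟩)]
  exact Subtype.prop _

namespace Derivation

variable {R A : Type*} [CommRing R] [CommRing A] [Algebra R A]

def IsLocallyNilpotent (D : Derivation R A A) : Prop :=
  ∀ a, ∃ n, (⇑D)^[n] a = 0

theorem ad_pow_apply_of_apply_eq_algebraMap {Δ : Derivation R A A} {a : A} {c : R}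
    (ha : Δ a = algebraMap R A c) (D : Derivation R A A) (n : ℕ) :
    (LieAlgebra.ad R _ Δ ^ n) D a = (⇑Δ)^[n] (D a) := by
  induction n with
  | zero => rfl
  | succ n ih =>
    rw [pow_succ', Module.End.mul_apply, LieAlgebra.ad_apply, commutator_apply, ih, ha,
      map_algebraMap, sub_zero, Function.iterate_succ_apply']

theorem iterate_apply_eq_pow_mul {D : Derivation R A A} {r p : A} (hr : D r = 0)
    (hp : D p = r * p) (n : ℕ) : (⇑D)^[n] p = r ^ n * p := by
  induction n with
  | zero => simp
  | succ n ih =>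
    rw [Function.iterate_succ_apply', ih, leibniz, leibniz_pow, hr, hp]
    simp only [smul_eq_mul]
    ring

theorem IsLocallyNilpotent.eq_zero_or_eq_zero_of_apply_eq_mul [IsDomain A]
    {D : Derivation R A A} (hD : D.IsLocallyNilpotent) {r p : A} (hr : D r = 0)
    (hp : D p = r * p) : r = 0 ∨ p = 0 := by
  obtain ⟨n, hn⟩ := hD p
  rw [iterate_apply_eq_pow_mul hr hp] at hn
  exact (mul_eq_zero.1 hn).imp_left eq_zero_of_pow_eq_zero

theorem apply_iterate_eq_pow_mul_of_lie_eq_smul {Δ D : Derivation R A A} {r : A}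
    (h : ⁅Δ, D⁆ = r • Δ) (hr : D r = 0) {a : A} (ha : D (Δ a) = 0) (n : ℕ) :
    Δ ((⇑D)^[n] a) = r ^ n * Δ a := by
  have hΔD : ∀ b, Δ (D b) = D (Δ b) + r * Δ b := fun b => by
    simpa [commutator_apply, sub_eq_iff_eq_add'] using congrArg (· b) h
  induction n with
  | zero => simp
  | succ n ih =>
    rw [Function.iterate_succ_apply', hΔD, ih, leibniz, leibniz_pow, hr, ha]
    simp only [smul_eq_mul]
    ring

end Derivation

namespace MvPolynomial

variable {R σ : Type*}

theorem lie_pderiv_pderiv [CommRing R] (i j : σ) :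
    ⁅(pderiv i : Derivation R (MvPolynomial σ R) (MvPolynomial σ R)),
      (pderiv j : Derivation R (MvPolynomial σ R) (MvPolynomial σ R))⁆ = 0 := by
  classical
  refine derivation_ext fun k => ?_
  simp [Derivation.commutator_apply, pderiv_X, Pi.single_apply, apply_ite]

theorem pderiv_pderiv_comm [CommRing R] (i j : σ) (p : MvPolynomial σ R) :
    pderiv i (pderiv j p) = pderiv j (pderiv i p) := by
  simpa [Derivation.commutator_apply, sub_eq_zero] using
    congrArg (· p) (lie_pderiv_pderiv (R := R) i j)

theorem derivation_eq_sum_smul_pderiv [CommSemiring R] [Fintype σ]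
    (D : Derivation R (MvPolynomial σ R) (MvPolynomial σ R)) :
    D = ∑ i, D (X i) • pderiv i := by
  classical
  refine derivation_ext fun j => ?_
  change _ = Derivation.coeFnAddMonoidHom (∑ i, D (X i) • pderiv i) (X j)
  rw [map_sum]
  simp [Finset.sum_apply, pderiv_X, Pi.single_apply]

theorem lie_smul_pderiv_apply_X_self [CommRing R] (q : MvPolynomial σ R) (i : σ)
    (D : Derivation R (MvPolynomial σ R) (MvPolynomial σ R)) :
    ⁅q • (pderiv i : Derivation R (MvPolynomial σ R) (MvPolynomial σ R)), D⁆ (X i) =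
      q * pderiv i (D (X i)) - D q := by
  rw [Derivation.commutator_apply, Derivation.smul_apply, Derivation.smul_apply, pderiv_X_self,
    smul_eq_mul, smul_eq_mul, mul_one]

theorem lie_smul_pderiv_apply_X_of_ne [CommRing R] (q : MvPolynomial σ R) {i j : σ} (h : j ≠ i)
    (D : Derivation R (MvPolynomial σ R) (MvPolynomial σ R)) :
    ⁅q • (pderiv i : Derivation R (MvPolynomial σ R) (MvPolynomial σ R)), D⁆ (X j) =
      q * pderiv i (D (X j)) := by
  rw [Derivation.commutator_apply, Derivation.smul_apply, Derivation.smul_apply,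
    pderiv_X_of_ne h, smul_zero, map_zero, sub_zero, smul_eq_mul]

section CharZero

variable [CommRing R] [IsDomain R] [CharZero R]

theorem coeff_eq_zero_of_pderiv_eq_zero {i : σ} {p : MvPolynomial σ R} (h : pderiv i p = 0)
    {m : σ →₀ ℕ} (hm : m i ≠ 0) : coeff m p = 0 := by
  have := coeff_pderiv (i := i) p (m - Finsupp.single i 1)
  rw [h, coeff_zero, tsub_add_cancel_of_le
    (Finsupp.single_le_iff.2 (Nat.one_le_iff_ne_zero.2 hm))] at this
  exact (mul_eq_zero.1 this.symm).resolve_right (Nat.cast_add_one_ne_zero _)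

theorem eq_C_of_forall_pderiv_eq_zero {p : MvPolynomial σ R} (h : ∀ i, pderiv i p = 0) :
    p = C (coeff 0 p) := by
  classical
  ext m
  rcases eq_or_ne m 0 with rfl | hm
  · simp
  obtain ⟨i, hi⟩ := Finsupp.ne_iff.1 hm
  rw [Finsupp.coe_zero, Pi.zero_apply] at hi
  rw [coeff_eq_zero_of_pderiv_eq_zero (h i) hi, coeff_C, if_neg (Ne.symm hm)]

theorem exists_eq_aeval_X_of_pderiv_eq_zero {i : σ} {p : MvPolynomial σ R}
    (h : ∀ j ≠ i, pderiv j p = 0) : ∃ q : Polynomial R, p = Polynomial.aeval (X i) q := by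
  refine ⟨∑ m ∈ p.support, Polynomial.monomial (m i) (coeff m p), ?_⟩
  conv_lhs => rw [p.as_sum]
  refine (map_sum _ _ _).trans ?_ |>.symm
  refine Finset.sum_congr rfl fun m hm => ?_
  have hm_single : m = Finsupp.single i (m i) := by
    ext j
    rcases eq_or_ne j i with rfl | hj
    · simp
    · rw [Finsupp.single_eq_of_ne hj]
      by_contra hmj
      exact mem_support_iff.1 hm (coeff_eq_zero_of_pderiv_eq_zero (h j hj) hmj)
  rw [Polynomial.aeval_monomial, algebraMap_eq, C_mul_X_pow_eq_monomial, ← hm_single]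

end CharZero

variable [CommRing R] [IsDomain R]

theorem _root_.Derivation.IsLocallyNilpotent.eq_zero_of_apply_X_eq_C_mul_X
    {D : Derivation R (MvPolynomial σ R) (MvPolynomial σ R)} (hD : D.IsLocallyNilpotent)
    {i : σ} {c : R} (h : D (X i) = C c * X i) : c = 0 := by
  rcases hD.eq_zero_or_eq_zero_of_apply_eq_mul (derivation_C D c) h with hc | hX
  · exact C_eq_zero.1 hc
  · exact absurd hX (X_ne_zero i)

theorem eq_zero_of_mem_of_apply_X_eq_C_mul_X_add_C
    {L : LieSubalgebra R (Derivation R (MvPolynomial σ R) (MvPolynomial σ R))}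
    (hL : ∀ D ∈ L, (D : Derivation R (MvPolynomial σ R) (MvPolynomial σ R)).IsLocallyNilpotent)
    {i : σ} (hi : (pderiv i : Derivation R (MvPolynomial σ R) (MvPolynomial σ R)) ∈ L)
    {F : Derivation R (MvPolynomial σ R) (MvPolynomial σ R)} (hF : F ∈ L) {c d : R}
    (h : F (X i) = C c * X i + C d) : c = 0 := by
  have hmem : F - d • pderiv i ∈ L := L.sub_mem hF (L.smul_mem d hi)
  refine (hL _ hmem).eq_zero_of_apply_X_eq_C_mul_X (i := i) ?_
  rw [Derivation.sub_apply, h, Derivation.smul_apply, pderiv_X_self, smul_eq_C_mul, mul_one,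
    add_sub_cancel_right]

end MvPolynomial

section Bivariate

variable {R : Type*} [CommRing R] [IsDomain R]
  {L : LieSubalgebra R (Derivation R (MvPolynomial (Fin 2) R) (MvPolynomial (Fin 2) R))}

local notation "𝔸" => MvPolynomial (Fin 2) R
local notation "𝔻" => Derivation R 𝔸 𝔸

theorem Derivation.IsLocallyNilpotent.pderiv_one_apply_X_one_eq_zero {E : 𝔻}
    (hE : E.IsLocallyNilpotent) (h0 : E (X 0) = 0) (h1 : pderiv 1 (pderiv 1 (E (X 1))) = 0) :
    pderiv 1 (E (X 1)) = 0 := by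
  -- `E = E y • ∂_y`, so `E y` is an eigenvector of `E` with eigenvalue `∂_y (E y) ∈ ker E`
  have hE' : ∀ p, E p = E (X 1) * pderiv 1 p := fun p => by
    conv_lhs => rw [derivation_eq_sum_smul_pderiv E]
    simp [Fin.sum_univ_two, h0]
  rcases hE.eq_zero_or_eq_zero_of_apply_eq_mul (r := pderiv 1 (E (X 1)))
    (by rw [hE' (pderiv 1 _), h1, mul_zero]) (by rw [hE' (E (X 1)), mul_comm]) with hb | hy
  · exact hb
  · rw [hy, map_zero]

theorem pderiv_one_apply_X_one_eq_zero_of_apply_X_zero_eq_zero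
    (hL : ∀ D ∈ L, (D : 𝔻).IsLocallyNilpotent) (hy : (pderiv 1 : 𝔻) ∈ L) {E : 𝔻} (hE : E ∈ L)
    (h0 : E (X 0) = 0) : pderiv 1 (E (X 1)) = 0 := by
  by_contra hy1
  obtain ⟨k, hk1, hk2⟩ :=
    Function.exists_iterate_apply_ne_zero_apply_apply_eq_zero (map_zero _) hy1 (hL _ hy _)
  have hFy := Derivation.ad_pow_apply_of_apply_eq_algebraMap
    ((pderiv_X_self (R := R) 1).trans (map_one _).symm) E k
  have hFx := Derivation.ad_pow_apply_of_apply_eq_algebraMap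
    ((pderiv_X_of_ne (R := R) (by decide : (0 : Fin 2) ≠ 1)).trans (map_zero _).symm) E k
  rw [h0, iterate_map_zero] at hFx
  refine hk1 ?_
  rw [← hFy] at hk2 ⊢
  exact (hL _ (L.ad_pow_apply_mem hy hE k)).pderiv_one_apply_X_one_eq_zero hFx hk2

theorem pderiv_one_pderiv_one_apply_X_one_eq_zero
    (hL : ∀ D ∈ L, (D : 𝔻).IsLocallyNilpotent) (hy : (pderiv 1 : 𝔻) ∈ L)
    (hxy : (X 0 : 𝔸) • (pderiv 1 : 𝔻) ∈ L) {D : 𝔻} (hD : D ∈ L)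
    (h0 : pderiv 1 (D (X 0)) = 0) : pderiv 1 (pderiv 1 (D (X 1))) = 0 := by
  have h := pderiv_one_apply_X_one_eq_zero_of_apply_X_zero_eq_zero hL hy (L.lie_mem hxy hD)
    (by rw [lie_smul_pderiv_apply_X_of_ne _ (by decide), h0, mul_zero])
  rw [lie_smul_pderiv_apply_X_self, map_sub, h0, sub_zero, pderiv_mul,
    pderiv_X_of_ne (by decide : (0 : Fin 2) ≠ 1), zero_mul, zero_add] at h
  exact (mul_eq_zero.1 h).resolve_left (X_ne_zero 0)

variable [CharZero R]

theorem exists_apply_X_zero_eq_C (hL : ∀ D ∈ L, (D : 𝔻).IsLocallyNilpotent)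
    (hx : (pderiv 0 : 𝔻) ∈ L) {E : 𝔻} (hE : E ∈ L) (h : pderiv 1 (E (X 0)) = 0) :
    ∃ γ, E (X 0) = C γ := by
  by_cases hx0 : pderiv 0 (E (X 0)) = 0
  · exact ⟨_, eq_C_of_forall_pderiv_eq_zero (Fin.forall_fin_two.2 ⟨hx0, h⟩)⟩
  exfalso
  obtain ⟨k, hk1, hk2⟩ :=
    Function.exists_iterate_apply_ne_zero_apply_apply_eq_zero (map_zero _) hx0 (hL _ hx _)
  set δ := (⇑(pderiv 0 : 𝔻))^[k] (E (X 0))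
  have hyδ : pderiv 1 δ = 0 := by
    rw [(Function.Commute.iterate_right (fun p => pderiv_pderiv_comm 1 0 p) k) _, h,
      iterate_map_zero]
  set γ₁ := coeff 0 (pderiv 0 δ)
  have hγ₁ : pderiv 0 δ = C γ₁ := eq_C_of_forall_pderiv_eq_zero
    (Fin.forall_fin_two.2 ⟨hk2, by rw [pderiv_pderiv_comm, hyδ, map_zero]⟩)
  have hδ : δ - C γ₁ * X 0 = C (coeff 0 (δ - C γ₁ * X 0)) := eq_C_of_forall_pderiv_eq_zero
    (Fin.forall_fin_two.2 ⟨by simp [hγ₁], by simp [hyδ]⟩)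
  refine hk1 (hγ₁.trans (C_eq_zero.2 ?_))
  refine eq_zero_of_mem_of_apply_X_eq_C_mul_X_add_C hL hx (L.ad_pow_apply_mem hx hE k)
    (d := coeff 0 (δ - C γ₁ * X 0)) ?_
  rw [Derivation.ad_pow_apply_of_apply_eq_algebraMap ((pderiv_X_self 0).trans (map_one _).symm),
    ← hδ, add_sub_cancel]

theorem pderiv_one_apply_X_zero_eq_zero (hL : ∀ D ∈ L, (D : 𝔻).IsLocallyNilpotent)
    (hx : (pderiv 0 : 𝔻) ∈ L) (hy : (pderiv 1 : 𝔻) ∈ L)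
    (hxy : (X 0 : 𝔸) • (pderiv 1 : 𝔻) ∈ L) {D : 𝔻} (hD : D ∈ L) :
    pderiv 1 (D (X 0)) = 0 := by
  by_contra hy0
  obtain ⟨k, hk1, hk2⟩ :=
    Function.exists_iterate_apply_ne_zero_apply_apply_eq_zero (map_zero _) hy0 (hL _ hy _)
  have hX0 : ∀ n, (LieAlgebra.ad R 𝔻 (pderiv 1) ^ n) D (X 0) =
      (⇑(pderiv 1 : 𝔻))^[n] (D (X 0)) :=
    Derivation.ad_pow_apply_of_apply_eq_algebraMap
      ((pderiv_X_of_ne (by decide : (0 : Fin 2) ≠ 1)).trans (map_zero _).symm) D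
  obtain ⟨γ, hγ⟩ := exists_apply_X_zero_eq_C hL hx (L.ad_pow_apply_mem hy hD (k + 1))
    (by rw [hX0, Function.iterate_succ_apply', hk2])
  rw [hX0, Function.iterate_succ_apply'] at hγ
  refine hk1 (hγ.trans (C_eq_zero.2 ?_))
  -- `⁅x ∂_y, (ad ∂_y)^k D⁆` sends `x` to `γ x`
  refine (hL _ (L.lie_mem hxy (L.ad_pow_apply_mem hy hD k))).eq_zero_of_apply_X_eq_C_mul_X
    (i := 0) ?_
  rw [lie_smul_pderiv_apply_X_of_ne _ (by decide), hX0, hγ, mul_comm]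

theorem pderiv_one_apply_X_one_eq_zero_of_apply_X_zero_eq_C
    (hL : ∀ D ∈ L, (D : 𝔻).IsLocallyNilpotent) (hx : (pderiv 0 : 𝔻) ∈ L) {D : 𝔻} (hD : D ∈ L)
    {α : R} (h0 : D (X 0) = C α) (h1 : pderiv 1 (pderiv 1 (D (X 1))) = 0) :
    pderiv 1 (D (X 1)) = 0 := by
  have hE0 : ⁅(pderiv 0 : 𝔻), D⁆ (X 0) = 0 := by
    rw [Derivation.commutator_apply, h0, pderiv_C, pderiv_X_self, Derivation.map_one_eq_zero,
      sub_zero]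
  have hE1 : ⁅(pderiv 0 : 𝔻), D⁆ (X 1) = pderiv 0 (D (X 1)) := by
    rw [Derivation.commutator_apply, pderiv_X_of_ne (by decide), map_zero, sub_zero]
  have hxb : pderiv 0 (pderiv 1 (D (X 1))) = 0 := by
    have := (hL _ (L.lie_mem hx hD)).pderiv_one_apply_X_one_eq_zero hE0
      (by rw [hE1, pderiv_pderiv_comm 1 0, pderiv_pderiv_comm 1 0, h1, map_zero])
    rwa [hE1, pderiv_pderiv_comm] at this
  set β := coeff 0 (pderiv 1 (D (X 1)))
  have hβ : pderiv 1 (D (X 1)) = C β :=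
    eq_C_of_forall_pderiv_eq_zero (Fin.forall_fin_two.2 ⟨hxb, h1⟩)
  have hlie : ⁅(pderiv 1 : 𝔻), D⁆ = (C β : 𝔸) • pderiv 1 :=
    derivation_ext <| Fin.forall_fin_two.2
      ⟨by simp [Derivation.commutator_apply, Derivation.smul_apply, h0,
          pderiv_X_of_ne (by decide : (0 : Fin 2) ≠ 1)],
        by simp [Derivation.commutator_apply, Derivation.smul_apply, hβ]⟩
  obtain ⟨n, hn⟩ := hL D hD (X 1)
  have := Derivation.apply_iterate_eq_pow_mul_of_lie_eq_smul hlie (derivation_C D β)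
    (by rw [pderiv_X_self, Derivation.map_one_eq_zero]) n
  rw [hn, map_zero, pderiv_X_self, mul_one, ← map_pow, eq_comm, C_eq_zero] at this
  rw [hβ, eq_zero_of_pow_eq_zero this, C_0]

end Bivariate

theorem lnd_subalgebra_triangular_general
    (K : Type*) [Field K] [CharZero K]
    (L : LieSubalgebra K (Derivation K (MvPolynomial (Fin 2) K) (MvPolynomial (Fin 2) K)))
    (hL : ∀ D ∈ L, ∀ a : MvPolynomial (Fin 2) K, ∃ n : ℕ, (fun x => D x)^[n] a = 0)
    (hx : (pderiv 0 : Derivation K (MvPolynomial (Fin 2) K) (MvPolynomial (Fin 2) K)) ∈ L)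
    (hy : (pderiv 1 : Derivation K (MvPolynomial (Fin 2) K) (MvPolynomial (Fin 2) K)) ∈ L)
    (hxy : (X 0 : MvPolynomial (Fin 2) K) •
      (pderiv 1 : Derivation K (MvPolynomial (Fin 2) K) (MvPolynomial (Fin 2) K)) ∈ L) :
    ∀ D ∈ L, ∃ (α : K) (q : Polynomial K),
      D = (C α : MvPolynomial (Fin 2) K) • pderiv 0 +
        (Polynomial.aeval (X 0 : MvPolynomial (Fin 2) K) q) • pderiv 1 := by
  intro D hD
  have hx0 := pderiv_one_apply_X_zero_eq_zero hL hx hy hxy hD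
  obtain ⟨α, hα⟩ := exists_apply_X_zero_eq_C hL hx hD hx0
  have hy1 := pderiv_one_apply_X_one_eq_zero_of_apply_X_zero_eq_C hL hx hD hα
    (pderiv_one_pderiv_one_apply_X_one_eq_zero hL hy hxy hD hx0)
  obtain ⟨q, hq⟩ := exists_eq_aeval_X_of_pderiv_eq_zero (i := 0) (p := D (X 1))
    (Fin.forall_fin_two.2 ⟨fun h => absurd rfl h, fun _ => hy1⟩)
  refine ⟨α, q, ?_⟩
  rw [← hα, ← hq]
  simpa [Fin.sum_univ_two] using derivation_eq_sum_smul_pderiv D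

/-- Let `L ⊆ Der_K(K[x,y])` be a Lie subalgebra of locally nilpotent derivations containing
`∂/∂x`, `∂/∂y`, `x∂/∂y`. Then every element of `L` has the form `α∂/∂x + q(x)∂/∂y` with
`α ∈ K`, `q ∈ K[x]`; that is, `L ⊆ u₂(K)`. -/
theorem lnd_subalgebra_triangular
    (K : Type*) [Field K] [IsAlgClosed K] [CharZero K]
    (L : LieSubalgebra K (Derivation K (MvPolynomial (Fin 2) K) (MvPolynomial (Fin 2) K)))
    (hL : ∀ D ∈ L, ∀ a : MvPolynomial (Fin 2) K, ∃ n : ℕ, (fun x => D x)^[n] a = 0)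
    (hx : (pderiv 0 : Derivation K (MvPolynomial (Fin 2) K) (MvPolynomial (Fin 2) K)) ∈ L)
    (hy : (pderiv 1 : Derivation K (MvPolynomial (Fin 2) K) (MvPolynomial (Fin 2) K)) ∈ L)
    (hxy : (X 0 : MvPolynomial (Fin 2) K) •
      (pderiv 1 : Derivation K (MvPolynomial (Fin 2) K) (MvPolynomial (Fin 2) K)) ∈ L) :
    ∀ D ∈ L, ∃ (α : K) (q : Polynomial K),
      D = (C α : MvPolynomial (Fin 2) K) • pderiv 0 +
        (Polynomial.aeval (X 0 : MvPolynomial (Fin 2) K) q) • pderiv 1 :=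
  lnd_subalgebra_triangular_general K L hL hx hy hxy
end
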